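/- arXiv:2507.15265 — 8 statements merged into one kernel-verified Lean document; each statement's English description precedes it below -/
import Mathlib

section
/- If 1 ≤ k < n, then there is no matrix A ∈ M_k(ℕ) with A^n = 2·I_k; i.e., the equation X^n − 2 = 0 has no solution in M_k(ℕ). -/
/-- If `1 ≤ k < n`, then the equation `X ^ n - 2 = 0` has no solution in `M_k(ℕ)`:
there is no matrix `A ∈ M_k(ℕ)` with `A ^ n = 2 • I_k`. -/
theorem stmt1 (n k : ℕ) (hk : 1 ≤ k) (hkn : k < n) :
    ¬ ∃ A : Matrix (Fin k) (Fin k) ℕ,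
        A ^ n = (2 : ℕ) • (1 : Matrix (Fin k) (Fin k) ℕ) := by
  rintro ⟨A, hA⟩
  set f := (Nat.castRingHom ℤ).mapMatrix (m := Fin k)
  have hB : (f A) ^ n = (2 : ℤ) • (1 : Matrix (Fin k) (Fin k) ℤ) := by
    have := congrArg f hA
    rw [map_pow, map_nsmul, map_one] at this
    rw [this]
    ext i j
    simp
  have h2 : ((2 : ℤ) • (1 : Matrix (Fin k) (Fin k) ℤ)).det = 2 ^ k := by
    rw [Matrix.det_smul]
    simp
  have hdet : (f A).det ^ n = 2 ^ k := by
    have := congrArg Matrix.det hB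
    rw [Matrix.det_pow, h2] at this
    exact this
  set d := (f A).det
  have habs : d.natAbs ^ n = 2 ^ k := by
    have : (d ^ n).natAbs = ((2 : ℤ) ^ k).natAbs := by rw [hdet]
    simpa [Int.natAbs_pow] using this
  have hn : 0 < n := by omega
  rcases Nat.lt_or_ge d.natAbs 2 with h2 | h2
  · have h2k : 2 ≤ 2 ^ k := by
      calc 2 = 2 ^ 1 := by norm_num
        _ ≤ 2 ^ k := Nat.pow_le_pow_right (by norm_num) hk
    interval_cases h : d.natAbs <;>
      simp [hn.ne', Nat.zero_pow, one_pow] at habs <;> omega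
  · have hge : 2 ^ n ≤ d.natAbs ^ n := Nat.pow_le_pow_left h2 n
    have hlt : 2 ^ k < 2 ^ n := Nat.pow_lt_pow_right (by norm_num) hkn
    omega
end

section
/- Let n, m ≥ 1. If there exists a matrix A ∈ M_m(ℕ) with A^n = 2·I_m (i.e., the equation X^n − 2 = 0 is solvable in M_m(ℕ)), then n divides m. -/
/-!
Taking determinants (over `ℤ`) in `A ^ n = 2 • 1` gives `(det A) ^ n = 2 ^ m`; comparing
the exponents of `2` on both sides yields `n * v = m`, where `v` is the `2`-adic valuation
of `det A`.
-/

theorem Nat.dvd_of_pow_eq_prime_pow {p a n m : ℕ} (hp : p.Prime) (h : a ^ n = p ^ m) :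
    n ∣ m :=
  ⟨a.factorization p, by
    simpa [Nat.factorization_pow, hp.factorization_self] using
      (congrArg (·.factorization p) h).symm⟩

theorem Int.dvd_of_pow_eq_prime_pow {p n m : ℕ} {a : ℤ} (hp : p.Prime) (h : a ^ n = p ^ m) :
    n ∣ m :=
  Nat.dvd_of_pow_eq_prime_pow (a := a.natAbs) hp <| by
    simpa [Int.natAbs_pow] using congrArg Int.natAbs h

namespace Matrix

variable {ι : Type*} [Fintype ι] [DecidableEq ι]

theorem map_pow_eq_smul_one {R S : Type*} [Semiring R] [Semiring S] (f : R →+* S)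
    {A : Matrix ι ι R} {n : ℕ} {c : R} (h : A ^ n = c • 1) :
    A.map f ^ n = f c • 1 := by
  rw [← RingHom.mapMatrix_apply, ← map_pow, h]
  ext i j
  simp [one_apply, apply_ite f]

theorem det_pow_eq_of_pow_eq_smul_one {R : Type*} [CommRing R] {A : Matrix ι ι R} {n : ℕ}
    {c : R} (h : A ^ n = c • 1) :
    A.det ^ n = c ^ Fintype.card ι := by
  rw [← det_pow, h, det_smul, det_one, mul_one]

end Matrix

theorem stmt2_general (n m : ℕ)
    (h : ∃ A : Matrix (Fin m) (Fin m) ℕ,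
        A ^ n = (2 : ℕ) • (1 : Matrix (Fin m) (Fin m) ℕ)) :
    n ∣ m := by
  obtain ⟨A, hA⟩ := h
  have hdet := Matrix.det_pow_eq_of_pow_eq_smul_one
    (Matrix.map_pow_eq_smul_one (Nat.castRingHom ℤ) hA)
  rw [Fintype.card_fin] at hdet
  exact Int.dvd_of_pow_eq_prime_pow Nat.prime_two hdet

/-- If `n, m ≥ 1` and the equation `X ^ n - 2 = 0` is solvable in `M_m(ℕ)`
(i.e. some `A ∈ M_m(ℕ)` satisfies `A ^ n = 2 • I_m`), then `n ∣ m`. -/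
theorem stmt2 (n m : ℕ) (hn : 1 ≤ n) (hm : 1 ≤ m)
    (h : ∃ A : Matrix (Fin m) (Fin m) ℕ,
        A ^ n = (2 : ℕ) • (1 : Matrix (Fin m) (Fin m) ℕ)) :
    n ∣ m :=
  stmt2_general n m h
end

section
/- For all n, m ≥ 1, the following are equivalent: (1) every finite system of non-commutative polynomial equations over ℕ (in any number of variables) that is solvable in M_n(ℕ) is also solvable in M_m(ℕ); (2) n divides m. -/
/-!
If `n ∣ m`, the block-diagonal embedding `M_n(ℕ) → M_m(ℕ)` is a unital ring homomorphism, so it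
carries solutions of any polynomial system to solutions. Conversely, the relations
`e_ij e_kl = δ_jk e_il` and `∑ e_ii = 1` in `n²` unknowns are solved in `M_n(ℕ)` by the standard
matrix units. A solution in `M_m(ℕ)` gives idempotents `e_ii` with `tr e_ii = tr (e_i0 e_0i) =
tr (e_0i e_i0) = tr e_00`, whence `m = tr 1 = ∑ tr e_ii = n · tr e_00`.
-/

open Matrix

section Solvable

variable {R : Type*} [CommSemiring R]

def Solvable (A : Type*) [Semiring A] [Algebra R A] {X σ : Type*} (P Q : σ → FreeAlgebra R X) :
    Prop :=
  ∃ x : X → A, ∀ j, FreeAlgebra.lift R x (P j) = FreeAlgebra.lift R x (Q j)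

variable {A B : Type*} [Semiring A] [Algebra R A] [Semiring B] [Algebra R B]

theorem FreeAlgebra.algHom_comp_lift {X : Type*} (f : A →ₐ[R] B) (x : X → A) :
    f.comp (FreeAlgebra.lift R x) = FreeAlgebra.lift R (f ∘ x) := by
  ext; simp

theorem Solvable.map {X σ : Type*} {P Q : σ → FreeAlgebra R X} (h : Solvable A P Q)
    (f : A →ₐ[R] B) : Solvable B P Q := by
  obtain ⟨x, hx⟩ := h
  refine ⟨f ∘ x, fun j => ?_⟩
  simp only [← FreeAlgebra.algHom_comp_lift, AlgHom.comp_apply, hx j]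

theorem solvable_rename_iff {X X' σ σ' : Type*} (e : X ≃ X') (c : σ' ≃ σ)
    {P Q : σ → FreeAlgebra R X} :
    Solvable A (FreeAlgebra.lift R (FreeAlgebra.ι R ∘ e) ∘ P ∘ c)
        (FreeAlgebra.lift R (FreeAlgebra.ι R ∘ e) ∘ Q ∘ c) ↔ Solvable A P Q := by
  have lift_rename (y : X' → A) (p : FreeAlgebra R X) :
      FreeAlgebra.lift R y (FreeAlgebra.lift R (FreeAlgebra.ι R ∘ e) p) =
        FreeAlgebra.lift R (y ∘ e) p := by
    rw [← AlgHom.comp_apply, FreeAlgebra.algHom_comp_lift]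
    simp [Function.comp_def]
  constructor
  · rintro ⟨y, hy⟩
    refine ⟨y ∘ e, fun j => ?_⟩
    obtain ⟨j', rfl⟩ := c.surjective j
    simpa [lift_rename] using hy j'
  · rintro ⟨x, hx⟩
    refine ⟨x ∘ e.symm, fun j => ?_⟩
    simp only [Function.comp_apply, lift_rename]
    rw [Function.comp_assoc, e.symm_comp_self, Function.comp_id]
    exact hx (c j)

theorem Solvable.of_forall_fin
    (h : ∀ (k s : ℕ) (P Q : Fin s → FreeAlgebra R (Fin k)), Solvable A P Q → Solvable B P Q)
    {X σ : Type*} [Finite X] [Finite σ] {P Q : σ → FreeAlgebra R X} (hPQ : Solvable A P Q) :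
    Solvable B P Q := by
  obtain ⟨k, ⟨e⟩⟩ := Finite.exists_equiv_fin X
  obtain ⟨s, ⟨c⟩⟩ := Finite.exists_equiv_fin σ
  exact (solvable_rename_iff e c.symm).1 (h k s _ _ ((solvable_rename_iff e c.symm).2 hPQ))

end Solvable

section MatrixUnits

variable {I : Type*} [Fintype I] [DecidableEq I]

structure IsMatrixUnits {A : Type*} [Semiring A] (e : I → I → A) : Prop where
  mul_eq : ∀ i j k l, e i j * e k l = if j = k then e i l else 0
  sum_diag_eq_one : ∑ i, e i i = 1

theorem isMatrixUnits_single (R : Type*) [Semiring R] :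
    IsMatrixUnits (fun i j : I => Matrix.single i j (1 : R)) where
  mul_eq i j k l := by
    split_ifs with hjk
    · subst hjk; simp
    · simp [hjk]
  sum_diag_eq_one := sum_single_one

theorem IsMatrixUnits.natCast_card_dvd {R o : Type*} [CommSemiring R] [Fintype o]
    [DecidableEq o] {e : I → I → Matrix o o R} (he : IsMatrixUnits e) :
    (Fintype.card I : R) ∣ Fintype.card o := by
  have htrace : ∑ i, (e i i).trace = Fintype.card o := by
    rw [← trace_sum, he.sum_diag_eq_one, trace_one]
  rcases isEmpty_or_nonempty I with _ | ⟨⟨i₀⟩⟩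
  · simp [← htrace]
  have htrace_diag (i : I) : (e i i).trace = (e i₀ i₀).trace := by
    calc (e i i).trace = (e i i₀ * e i₀ i).trace := by simp [he.mul_eq]
      _ = (e i₀ i * e i i₀).trace := trace_mul_comm _ _
      _ = (e i₀ i₀).trace := by simp [he.mul_eq]
  refine ⟨(e i₀ i₀).trace, ?_⟩
  simp [← htrace, htrace_diag]

noncomputable def matrixUnitsLHS (R I : Type*) [CommSemiring R] [Fintype I] :
    Option (I × I × I × I) → FreeAlgebra R (I × I)
  | none => ∑ i, FreeAlgebra.ι R (i, i)
  | some (i, j, k, l) => FreeAlgebra.ι R (i, j) * FreeAlgebra.ι R (k, l)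

noncomputable def matrixUnitsRHS (R I : Type*) [CommSemiring R] [DecidableEq I] :
    Option (I × I × I × I) → FreeAlgebra R (I × I)
  | none => 1
  | some (i, j, k, l) => if j = k then FreeAlgebra.ι R (i, l) else 0

theorem solvable_matrixUnits_iff {R A : Type*} [CommSemiring R] [Semiring A] [Algebra R A] :
    Solvable A (matrixUnitsLHS R I) (matrixUnitsRHS R I) ↔ ∃ e : I → I → A, IsMatrixUnits e := by
  constructor
  · rintro ⟨x, hx⟩
    refine ⟨fun i j => x (i, j), ⟨fun i j k l => ?_, ?_⟩⟩
    · simpa [matrixUnitsLHS, matrixUnitsRHS, apply_ite] using hx (some (i, j, k, l))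
    · simpa [matrixUnitsLHS, matrixUnitsRHS] using hx none
  · rintro ⟨e, he⟩
    refine ⟨fun p => e p.1 p.2, ?_⟩
    rintro (_ | ⟨i, j, k, l⟩)
    · simpa [matrixUnitsLHS, matrixUnitsRHS] using he.sum_diag_eq_one
    · simpa [matrixUnitsLHS, matrixUnitsRHS, apply_ite] using he.mul_eq i j k l

end MatrixUnits

theorem Matrix.nonempty_algHom_of_card_dvd (R : Type*) [CommSemiring R] {I J : Type*} [Fintype I]
    [DecidableEq I] [Fintype J] [DecidableEq J] (h : Fintype.card I ∣ Fintype.card J) :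
    Nonempty (Matrix I I R →ₐ[R] Matrix J J R) := by
  obtain ⟨d, hd⟩ := h
  have e : Fin d × I ≃ J := Fintype.equivOfCardEq (by simp [hd, mul_comm])
  exact ⟨(reindexAlgEquiv R R e).toAlgHom.comp
    ((compAlgEquiv (Fin d) I R R).toAlgHom.comp (scalarAlgHom (Fin d) R))⟩

theorem stmt4_general (n m : ℕ) :
    (∀ (k s : ℕ) (P Q : Fin s → FreeAlgebra ℕ (Fin k)),
      (∃ X : Fin k → Matrix (Fin n) (Fin n) ℕ,
        ∀ j : Fin s, FreeAlgebra.lift ℕ X (P j) = FreeAlgebra.lift ℕ X (Q j)) →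
      (∃ Y : Fin k → Matrix (Fin m) (Fin m) ℕ,
        ∀ j : Fin s, FreeAlgebra.lift ℕ Y (P j) = FreeAlgebra.lift ℕ Y (Q j)))
    ↔ n ∣ m := by
  constructor
  · intro h
    have hsys : Solvable (Matrix (Fin n) (Fin n) ℕ) (matrixUnitsLHS ℕ (Fin n))
        (matrixUnitsRHS ℕ (Fin n)) :=
      solvable_matrixUnits_iff.2 ⟨_, isMatrixUnits_single ℕ⟩
    obtain ⟨e, he⟩ := solvable_matrixUnits_iff.1 (Solvable.of_forall_fin h hsys)
    simpa using he.natCast_card_dvd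
  · intro hnm k s P Q hPQ
    obtain ⟨f⟩ := Matrix.nonempty_algHom_of_card_dvd ℕ (I := Fin n) (J := Fin m)
      (by simpa using hnm)
    exact Solvable.map hPQ f

/-- For `n, m ≥ 1`: every finite system of non-commutative polynomial equations over `ℕ`
solvable in `M_n(ℕ)` is also solvable in `M_m(ℕ)` if and only if `n ∣ m`. -/
theorem stmt4 (n m : ℕ) (hn : 1 ≤ n) (hm : 1 ≤ m) :
    (∀ (k s : ℕ) (P Q : Fin s → FreeAlgebra ℕ (Fin k)),
      (∃ X : Fin k → Matrix (Fin n) (Fin n) ℕ,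
        ∀ j : Fin s, FreeAlgebra.lift ℕ X (P j) = FreeAlgebra.lift ℕ X (Q j)) →
      (∃ Y : Fin k → Matrix (Fin m) (Fin m) ℕ,
        ∀ j : Fin s, FreeAlgebra.lift ℕ Y (P j) = FreeAlgebra.lift ℕ Y (Q j)))
    ↔ n ∣ m :=
  stmt4_general n m
end

section
/- For all n, m ≥ 1, the following are equivalent: (1) a finite system of non-commutative polynomial equations over ℕ (in any number of variables) is solvable in M_n(ℕ) if and only if it is solvable in M_m(ℕ); (2) n = m. -/
/-!
Consider the system in the variables `a i, b i` (`i < k`) and `c`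
  `∑ i, a i * b i = 1`,  `b i * a i = c` for every `i`.
A solution in `M_d(ℕ)` gives `d = tr 1 = ∑ tr (a i * b i) = ∑ tr (b i * a i) = k * tr c`,
so `k ∣ d`; conversely, for `d = k * t` the block matrices `a i = E i 0 ⊗ 1`,
`b i = E 0 i ⊗ 1` solve it.
Hence if `M_n(ℕ)` and `M_m(ℕ)` solve the same systems, then `n ∣ m` and `m ∣ n`.
-/

open Matrix Kronecker

section TraceSystem

theorem dvd_card_of_sum_mul_eq_one {κ ν : Type*} [Fintype κ] [Fintype ν] [DecidableEq ν]
    (A B : κ → Matrix ν ν ℕ) (C : Matrix ν ν ℕ)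
    (hsum : ∑ i, A i * B i = 1) (hC : ∀ i, B i * A i = C) :
    Fintype.card κ ∣ Fintype.card ν := by
  refine ⟨C.trace, ?_⟩
  calc Fintype.card ν = (∑ i, A i * B i).trace := by rw [hsum, trace_one, Nat.cast_id]
    _ = ∑ i, (B i * A i).trace := by simp only [trace_sum, trace_mul_comm (A _)]
    _ = Fintype.card κ * C.trace := by simp [hC]

theorem sum_single_kronecker_one_mul {R κ τ : Type*} [CommSemiring R] [Fintype κ]
    [DecidableEq κ] [Fintype τ] [DecidableEq τ] (j : κ) :
    ∑ i : κ, (single i j (1 : R) ⊗ₖ (1 : Matrix τ τ R)) * (single j i 1 ⊗ₖ (1 : Matrix τ τ R)) =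
      1 := by
  simp only [← mul_kronecker_mul, single_mul_single_same, mul_one]
  calc ∑ i : κ, single i i (1 : R) ⊗ₖ (1 : Matrix τ τ R)
      = (∑ i : κ, single i i (1 : R)) ⊗ₖ (1 : Matrix τ τ R) := by
        ext ⟨a, b⟩ ⟨c, e⟩
        simp only [Matrix.sum_apply, kronecker_apply, Finset.sum_mul]
    _ = 1 := by rw [sum_single_one, one_kronecker_one]

theorem single_kronecker_one_mul {R κ τ : Type*} [CommSemiring R] [Fintype κ]
    [DecidableEq κ] [Fintype τ] [DecidableEq τ] (i j : κ) :
    (single j i (1 : R) ⊗ₖ (1 : Matrix τ τ R)) * (single i j 1 ⊗ₖ (1 : Matrix τ τ R)) =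
      single j j 1 ⊗ₖ 1 := by
  rw [← mul_kronecker_mul, single_mul_single_same, mul_one, mul_one]

theorem exists_sum_mul_eq_one_of_dvd {k d : ℕ} (h : k ∣ d) :
    ∃ (A B : Fin k → Matrix (Fin d) (Fin d) ℕ) (C : Matrix (Fin d) (Fin d) ℕ),
      ∑ i, A i * B i = 1 ∧ ∀ i, B i * A i = C := by
  rcases k.eq_zero_or_pos with rfl | hk
  · obtain rfl := zero_dvd_iff.1 h
    exact ⟨0, 0, 0, Subsingleton.elim _ _, fun _ => Subsingleton.elim _ _⟩
  obtain ⟨t, rfl⟩ := h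
  let φ := reindexAlgEquiv ℕ ℕ (finProdFinEquiv (m := k) (n := t))
  let j : Fin k := ⟨0, hk⟩
  refine ⟨fun i => φ (single i j 1 ⊗ₖ 1), fun i => φ (single j i 1 ⊗ₖ 1),
    φ (single j j 1 ⊗ₖ 1), ?_, fun i => ?_⟩
  · simp only [← map_mul, ← map_sum, sum_single_kronecker_one_mul, map_one]
  · rw [← map_mul, single_kronecker_one_mul]

end TraceSystem

section PolynomialSystems

open FreeAlgebra

variable {V V' E E' : Type*}

def IsSolvableIn (d : ℕ) (S : E → FreeAlgebra ℕ V × FreeAlgebra ℕ V) : Prop :=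
  ∃ X : V → Matrix (Fin d) (Fin d) ℕ, ∀ j, lift ℕ X (S j).1 = lift ℕ X (S j).2

theorem isSolvableIn_comp_equiv (d : ℕ) (S : E → FreeAlgebra ℕ V × FreeAlgebra ℕ V)
    (e : E' ≃ E) : IsSolvableIn d (S ∘ e) ↔ IsSolvableIn d S := by
  simp only [IsSolvableIn, Function.comp_apply, e.surjective.forall]

theorem FreeAlgebra.lift_lift_ι_comp {R A : Type*} [CommSemiring R] [Semiring A] [Algebra R A]
    (X : V' → A) (e : V → V') (p : FreeAlgebra R V) :
    lift R X (lift R (ι R ∘ e) p) = lift R (X ∘ e) p := by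
  rw [← AlgHom.comp_apply]
  congr 1
  ext
  simp

theorem isSolvableIn_rename (d : ℕ) (S : E → FreeAlgebra ℕ V × FreeAlgebra ℕ V) (e : V ≃ V') :
    IsSolvableIn d (Prod.map (lift ℕ (ι ℕ ∘ e)) (lift ℕ (ι ℕ ∘ e)) ∘ S) ↔ IsSolvableIn d S := by
  simp only [IsSolvableIn, Function.comp_apply, Prod.map_fst, Prod.map_snd, lift_lift_ι_comp]
  constructor
  · rintro ⟨X, hX⟩
    exact ⟨X ∘ e, hX⟩
  · rintro ⟨X, hX⟩
    refine ⟨X ∘ e.symm, ?_⟩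
    simpa only [Function.comp_assoc, e.symm_comp_self, Function.comp_id] using hX

theorem isSolvableIn_iff_of_forall_fin {n m : ℕ}
    (H : ∀ (k s : ℕ) (S : Fin s → FreeAlgebra ℕ (Fin k) × FreeAlgebra ℕ (Fin k)),
      IsSolvableIn n S ↔ IsSolvableIn m S)
    [Fintype V] [Fintype E] (S : E → FreeAlgebra ℕ V × FreeAlgebra ℕ V) :
    IsSolvableIn n S ↔ IsSolvableIn m S := by
  let eV := Fintype.equivFin V
  let T := (Prod.map (lift ℕ (ι ℕ ∘ eV)) (lift ℕ (ι ℕ ∘ eV)) ∘ S) ∘ (Fintype.equivFin E).symm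
  have hT (d : ℕ) : IsSolvableIn d T ↔ IsSolvableIn d S := by
    rw [isSolvableIn_comp_equiv, isSolvableIn_rename]
  rw [← hT n, ← hT m]
  exact H _ _ T

/-- The system of the header, with `a i`, `b i`, `c` encoded as `inl i`, `inr (inl i)`,
`inr (inr ())`. -/
noncomputable def traceSystem (k : ℕ) :
    Option (Fin k) → FreeAlgebra ℕ (Fin k ⊕ Fin k ⊕ Unit) × FreeAlgebra ℕ (Fin k ⊕ Fin k ⊕ Unit)
  | none => (∑ i, ι ℕ (.inl i) * ι ℕ (.inr (.inl i)), 1)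
  | some i => (ι ℕ (.inr (.inl i)) * ι ℕ (.inl i), ι ℕ (.inr (.inr ())))

theorem isSolvableIn_traceSystem_iff_exists (k d : ℕ) :
    IsSolvableIn d (traceSystem k) ↔
      ∃ (A B : Fin k → Matrix (Fin d) (Fin d) ℕ) (C : Matrix (Fin d) (Fin d) ℕ),
        ∑ i, A i * B i = 1 ∧ ∀ i, B i * A i = C := by
  simp only [IsSolvableIn, Option.forall, traceSystem, map_sum, map_mul, map_one, lift_ι_apply]
  constructor
  · rintro ⟨X, hsum, hC⟩
    exact ⟨_, _, _, hsum, hC⟩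
  · rintro ⟨A, B, C, hsum, hC⟩
    exact ⟨Sum.elim A (Sum.elim B fun _ => C), hsum, hC⟩

theorem isSolvableIn_traceSystem_iff (k d : ℕ) : IsSolvableIn d (traceSystem k) ↔ k ∣ d := by
  rw [isSolvableIn_traceSystem_iff_exists]
  refine ⟨fun ⟨A, B, C, hsum, hC⟩ => ?_, exists_sum_mul_eq_one_of_dvd⟩
  simpa using dvd_card_of_sum_mul_eq_one A B C hsum hC

end PolynomialSystems

theorem stmt5_general (n m : ℕ) :
    (∀ (k s : ℕ) (P Q : Fin s → FreeAlgebra ℕ (Fin k)),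
      (∃ X : Fin k → Matrix (Fin n) (Fin n) ℕ,
        ∀ j : Fin s, FreeAlgebra.lift ℕ X (P j) = FreeAlgebra.lift ℕ X (Q j)) ↔
      (∃ Y : Fin k → Matrix (Fin m) (Fin m) ℕ,
        ∀ j : Fin s, FreeAlgebra.lift ℕ Y (P j) = FreeAlgebra.lift ℕ Y (Q j)))
    ↔ n = m := by
  refine ⟨fun H => ?_, by rintro rfl _ _ _ _; rfl⟩
  have hS : ∀ k s (S : Fin s → FreeAlgebra ℕ (Fin k) × FreeAlgebra ℕ (Fin k)),
      IsSolvableIn n S ↔ IsSolvableIn m S :=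
    fun k s S => H k s (Prod.fst ∘ S) (Prod.snd ∘ S)
  have hdvd {a b : ℕ} (h : IsSolvableIn a (traceSystem a) → IsSolvableIn b (traceSystem a)) :
      a ∣ b := by
    simpa only [isSolvableIn_traceSystem_iff, dvd_refl, true_imp_iff] using h
  exact Nat.dvd_antisymm (hdvd (isSolvableIn_iff_of_forall_fin hS _).1)
    (hdvd (isSolvableIn_iff_of_forall_fin hS _).2)

/-- For `n, m ≥ 1`: a finite system of non-commutative polynomial equations over `ℕ` is
solvable in `M_n(ℕ)` if and only if it is solvable in `M_m(ℕ)`, for all systems, exactly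
when `n = m`. -/
theorem stmt5 (n m : ℕ) (hn : 1 ≤ n) (hm : 1 ≤ m) :
    (∀ (k s : ℕ) (P Q : Fin s → FreeAlgebra ℕ (Fin k)),
      (∃ X : Fin k → Matrix (Fin n) (Fin n) ℕ,
        ∀ j : Fin s, FreeAlgebra.lift ℕ X (P j) = FreeAlgebra.lift ℕ X (Q j)) ↔
      (∃ Y : Fin k → Matrix (Fin m) (Fin m) ℕ,
        ∀ j : Fin s, FreeAlgebra.lift ℕ Y (P j) = FreeAlgebra.lift ℕ Y (Q j)))
    ↔ n = m :=
  stmt5_general n m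
end

section
/- For all n, m ≥ 1, the following are equivalent: (1) a finite system of non-commutative polynomial equations with integer coefficients (in any number of variables) is solvable in M_n(ℤ) if and only if it is solvable in M_m(ℤ); (2) n = m. -/
open Matrix FreeAlgebra

noncomputable def sys7 (n : ℕ) (j : Fin (n + 1)) : FreeAlgebra ℤ (Fin (n + n)) :=
  if h : (j : ℕ) < n then
    FreeAlgebra.ι ℤ (Fin.natAdd n ⟨j, h⟩) * FreeAlgebra.ι ℤ (Fin.castAdd n ⟨j, h⟩)
      - FreeAlgebra.ι ℤ (Fin.natAdd n ⟨0, Nat.lt_of_le_of_lt (Nat.zero_le _) h⟩)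
        * FreeAlgebra.ι ℤ (Fin.castAdd n ⟨0, Nat.lt_of_le_of_lt (Nat.zero_le _) h⟩)
  else (∑ i : Fin n, FreeAlgebra.ι ℤ (Fin.castAdd n i) * FreeAlgebra.ι ℤ (Fin.natAdd n i)) - 1

lemma sys7_dvd (n d : ℕ) (hn : 0 < n) (Y : Fin (n + n) → Matrix (Fin d) (Fin d) ℤ)
    (h : ∀ j : Fin (n + 1), FreeAlgebra.lift ℤ Y (sys7 n j) = 0) : n ∣ d := by
  set a : Fin n → Matrix (Fin d) (Fin d) ℤ := fun i => Y (Fin.castAdd n i) with ha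
  set b : Fin n → Matrix (Fin d) (Fin d) ℤ := fun i => Y (Fin.natAdd n i) with hb
  have h1 : ∀ i : Fin n, b i * a i = b ⟨0, hn⟩ * a ⟨0, hn⟩ := by
    intro i
    have := h ⟨i, Nat.lt_succ_of_lt i.isLt⟩
    rw [sys7] at this
    simp only [i.isLt, dif_pos] at this
    simp only [_root_.map_sub, _root_.map_mul, lift_ι_apply, sub_eq_zero] at this
    exact this
  have h2 : (∑ i : Fin n, a i * b i) = 1 := by
    have := h (Fin.last n)
    rw [sys7] at this
    simp only [Fin.val_last, lt_irrefl, dif_neg, not_false_iff] at this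
    simp only [_root_.map_sub, _root_.map_one, _root_.map_sum, _root_.map_mul,
      lift_ι_apply, sub_eq_zero] at this
    exact this
  have htr : (d : ℤ) = n * Matrix.trace (b ⟨0, hn⟩ * a ⟨0, hn⟩) := by
    calc (d : ℤ) = Matrix.trace (1 : Matrix (Fin d) (Fin d) ℤ) := by
          rw [Matrix.trace_one]; simp
      _ = Matrix.trace (∑ i : Fin n, a i * b i) := by rw [h2]
      _ = ∑ i : Fin n, Matrix.trace (a i * b i) := by rw [Matrix.trace_sum]
      _ = ∑ i : Fin n, Matrix.trace (b i * a i) :=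
          Finset.sum_congr rfl fun i _ => Matrix.trace_mul_comm _ _
      _ = ∑ _i : Fin n, Matrix.trace (b ⟨0, hn⟩ * a ⟨0, hn⟩) :=
          Finset.sum_congr rfl fun i _ => by rw [h1 i]
      _ = n * Matrix.trace (b ⟨0, hn⟩ * a ⟨0, hn⟩) := by
          simp [Finset.sum_const, mul_comm]
  have : (n : ℤ) ∣ (d : ℤ) := ⟨_, htr⟩
  exact_mod_cast this

lemma sys7_sol (n : ℕ) (hn : 0 < n) :
    ∃ X : Fin (n + n) → Matrix (Fin n) (Fin n) ℤ,
      ∀ j : Fin (n + 1), FreeAlgebra.lift ℤ X (sys7 n j) = 0 := by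
  refine ⟨Fin.append (fun i => Matrix.single i ⟨0, hn⟩ 1)
      (fun i => Matrix.single ⟨0, hn⟩ i 1), ?_⟩
  intro j
  rw [sys7]
  by_cases h : (j : ℕ) < n
  · rw [dif_pos h]
    simp only [_root_.map_sub, _root_.map_mul, lift_ι_apply,
      Fin.append_left, Fin.append_right]
    rw [Matrix.single_mul_single_same, Matrix.single_mul_single_same]
    simp
  · rw [dif_neg h]
    simp only [_root_.map_sub, _root_.map_one, _root_.map_sum, _root_.map_mul,
      lift_ι_apply, Fin.append_left, Fin.append_right]
    have : (∑ i : Fin n, Matrix.single i ⟨0, hn⟩ (1:ℤ) * Matrix.single ⟨0, hn⟩ i 1)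
        = 1 := by
      simp_rw [Matrix.single_mul_single_same, one_mul]
      ext p q
      rw [Matrix.sum_apply]
      by_cases hpq : p = q
      · subst hpq
        simp [Matrix.single, Matrix.one_apply, Finset.sum_ite_eq]
      · simp [Matrix.single, Matrix.one_apply, hpq]
    rw [this, sub_self]

/-- For `n, m ≥ 1`: a finite system of non-commutative polynomial equations with integer
coefficients is solvable in `M_n(ℤ)` iff it is solvable in `M_m(ℤ)`, for all systems,
exactly when `n = m`. -/
theorem stmt7 (n m : ℕ) (hn : 1 ≤ n) (hm : 1 ≤ m) :
    (∀ (k s : ℕ) (P : Fin s → FreeAlgebra ℤ (Fin k)),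
      (∃ X : Fin k → Matrix (Fin n) (Fin n) ℤ,
        ∀ j : Fin s, FreeAlgebra.lift ℤ X (P j) = 0) ↔
      (∃ Y : Fin k → Matrix (Fin m) (Fin m) ℤ,
        ∀ j : Fin s, FreeAlgebra.lift ℤ Y (P j) = 0))
    ↔ n = m := by
  constructor
  · intro H
    have h1 : n ∣ m := by
      obtain ⟨Y, hY⟩ := (H (n + n) (n + 1) (sys7 n)).mp (sys7_sol n hn)
      exact sys7_dvd n m hn Y hY
    have h2 : m ∣ n := by
      obtain ⟨X, hX⟩ := (H (m + m) (m + 1) (sys7 m)).mpr (sys7_sol m hm)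
      exact sys7_dvd m n hm X hX
    exact Nat.dvd_antisymm h1 h2
  · rintro rfl
    intro k s P
    rfl
end

section
/- Let n ≥ 1 and let Y, A_1, …, A_{n−1} ∈ M_n(ℕ) satisfy Y + A_1·Y·A_1 + A_2·Y·A_2 + ⋯ + A_{n−1}·Y·A_{n−1} = I_n and A_1²·A_2²·⋯·A_{n−1}² = I_n. Then there exists an index i with 1 ≤ i ≤ n such that Y = E_{i,i}. -/
/-!
Let `s M` denote the sum of all entries of `M`. Over `ℤ` every `A_j` has unit determinant, so no
row or column of `A_j` vanishes; as its entries are natural numbers, all row and column sums of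
`A_j` are at least `1`, whence `s Y ≤ s (A_j Y A_j)`. Taking `s` of the first equation gives
`n * s Y ≤ s Y + ∑ s (A_j Y A_j) = n`, so `s Y ≤ 1`, while `Y ≠ 0` because `n ≥ 1`. Hence
`Y = E_{a,b}`, and `Y ≤ I_n` entrywise forces `a = b`.
-/

open Finset

theorem Fintype.exists_eq_pi_single_of_sum_eq_one {ι : Type*} [Fintype ι] [DecidableEq ι]
    (f : ι → ℕ) (h : ∑ i, f i = 1) : ∃ i, f = Pi.single i 1 := by
  obtain ⟨i, hi⟩ := (Finsupp.sum_eq_one_iff (Finsupp.equivFunOnFinite.symm f)).1 <| by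
    rwa [Finsupp.sum_fintype _ _ fun _ => rfl]
  exact ⟨i, by rw [← Finsupp.single_eq_pi_single, ← hi]; rfl⟩

theorem Nat.le_one_of_le_of_add_sum_eq {k s : ℕ} {t : Fin k → ℕ} (ht : ∀ j, s ≤ t j)
    (h : s + ∑ j, t j = k + 1) : s ≤ 1 := by
  have hks : (k + 1) * s ≤ (k + 1) * 1 := calc
    (k + 1) * s = s + ∑ _j : Fin k, s := by simp [add_mul, add_comm]
    _ ≤ s + ∑ j, t j := by gcongr with j; exact ht j
    _ = (k + 1) * 1 := by rw [h, mul_one]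
  exact Nat.le_of_mul_le_mul_left hks k.succ_pos

namespace Matrix

variable {l m n o : Type*} [Fintype l] [Fintype m] [Fintype n] [Fintype o]

theorem exists_eq_single_of_sum_sum_eq_one [DecidableEq m] [DecidableEq n] (Y : Matrix m n ℕ)
    (h : ∑ i, ∑ j, Y i j = 1) : ∃ i j, Y = single i j 1 := by
  obtain ⟨⟨i, j⟩, hij⟩ :=
    Fintype.exists_eq_pi_single_of_sum_eq_one (fun p : m × n => Y p.1 p.2)
      (by rwa [Fintype.sum_prod_type])
  refine ⟨i, j, ext fun a b => ?_⟩
  simpa [Pi.single_apply, single_apply, eq_comm] using congrFun hij (a, b)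

theorem sum_sum_mul_mul {R : Type*} [CommSemiring R] (A : Matrix l m R) (Y : Matrix m n R)
    (B : Matrix n o R) :
    ∑ i, ∑ k, (A * Y * B) i k = ∑ a, ∑ b, (∑ i, A i a) * Y a b * ∑ k, B b k := by
  have hsum (M : Matrix l o R) : ∑ i, ∑ k, M i k = 1 ⬝ᵥ (M *ᵥ 1) := by
    simp [dotProduct, mulVec]
  rw [hsum, ← mulVec_mulVec, ← mulVec_mulVec, dotProduct_mulVec]
  simp [dotProduct, mulVec, vecMul, mul_sum, sum_mul, mul_assoc]

theorem sum_sum_le_sum_sum_mul_mul {R : Type*} [CommSemiring R] [PartialOrder R]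
    [CanonicallyOrderedAdd R] [IsOrderedRing R] (A : Matrix l m R) (Y : Matrix m n R)
    (B : Matrix n o R) (hA : ∀ a, 1 ≤ ∑ i, A i a) (hB : ∀ b, 1 ≤ ∑ k, B b k) :
    ∑ a, ∑ b, Y a b ≤ ∑ i, ∑ k, (A * Y * B) i k := by
  rw [sum_sum_mul_mul]
  gcongr with a _ b _
  calc Y a b = 1 * Y a b * 1 := by ring
    _ ≤ _ := by gcongr <;> simp [hA, hB]

theorem isUnit_det_map_of_mem_of_list_prod_eq_one [DecidableEq n] {R S : Type*} [Semiring R]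
    [CommRing S] (f : R →+* S) {L : List (Matrix n n R)} (h : L.prod = 1) {M : Matrix n n R}
    (hM : M ∈ L) : IsUnit (M.map f).det := by
  have hprod : (L.map fun N => (N.map f).det).prod = 1 := by
    have hdet := map_list_prod
      (detMonoidHom.comp (f.mapMatrix : Matrix n n R →+* Matrix n n S).toMonoidHom) L
    simpa [h, Function.comp_def] using hdet.symm
  exact isUnit_of_dvd_one (hprod ▸ List.dvd_prod (List.mem_map_of_mem hM))

variable [DecidableEq n]

theorem one_le_sum_of_det_map_ne_zero {A : Matrix n n ℕ}
    (h : (A.map ((↑) : ℕ → ℤ)).det ≠ 0) (i : n) : 1 ≤ ∑ j, A i j := by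
  obtain ⟨j, hj⟩ : ∃ j, A i j ≠ 0 := by
    by_contra! hi
    exact h (det_eq_zero_of_row_eq_zero i (by simp [hi]))
  calc 1 ≤ A i j := Nat.one_le_iff_ne_zero.2 hj
    _ ≤ ∑ j, A i j := single_le_sum (fun _ _ => Nat.zero_le _) (mem_univ j)

theorem sum_sum_le_sum_sum_mul_mul_of_det_map_ne_zero {A B : Matrix n n ℕ}
    (hA : (A.map ((↑) : ℕ → ℤ)).det ≠ 0) (hB : (B.map ((↑) : ℕ → ℤ)).det ≠ 0)
    (Y : Matrix n n ℕ) : ∑ a, ∑ b, Y a b ≤ ∑ i, ∑ k, (A * Y * B) i k :=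
  sum_sum_le_sum_sum_mul_mul A Y B
    (one_le_sum_of_det_map_ne_zero (A := Aᵀ) (by rwa [transpose_map, det_transpose]))
    (one_le_sum_of_det_map_ne_zero hB)

end Matrix

open Matrix

/-- If `Y, A_1, …, A_{n-1} ∈ M_n(ℕ)` satisfy
`Y + A_1·Y·A_1 + ⋯ + A_{n-1}·Y·A_{n-1} = I_n` and `A_1²·A_2²·⋯·A_{n-1}² = I_n`
(the product taken in the listed order), then `Y = E_{i,i}` for some index `i`. -/
theorem stmt9 (n : ℕ) (hn : 1 ≤ n)
    (Y : Matrix (Fin n) (Fin n) ℕ) (A : Fin (n - 1) → Matrix (Fin n) (Fin n) ℕ)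
    (h1 : Y + ∑ j : Fin (n - 1), A j * Y * A j = 1)
    (h2 : (List.ofFn fun j : Fin (n - 1) => (A j) ^ 2).prod = 1) :
    ∃ i : Fin n, Y = Matrix.single i i 1 := by
  have hdet (j) : ((A j).map ((↑) : ℕ → ℤ)).det ≠ 0 := by
    have := isUnit_det_map_of_mem_of_list_prod_eq_one (Nat.castRingHom ℤ) h2
      (List.mem_ofFn.2 ⟨j, rfl⟩)
    rw [Matrix.map_pow, det_pow, isUnit_pow_iff two_ne_zero] at this
    exact this.ne_zero
  set s := ∑ a, ∑ b, Y a b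
  have htotal : s + ∑ j, ∑ i, ∑ k, (A j * Y * A j) i k = n := by
    simpa [sum_add_distrib, Matrix.sum_apply, one_apply, sum_comm (γ := Fin (n - 1))]
      using congrArg (fun M => ∑ i, ∑ k, M i k) h1
  have hs_le : s ≤ 1 :=
    Nat.le_one_of_le_of_add_sum_eq
      (fun j => sum_sum_le_sum_sum_mul_mul_of_det_map_ne_zero (hdet j) (hdet j) Y)
      (by rw [htotal]; omega)
  have hY : Y ≠ 0 := by
    rintro rfl
    simpa using congrFun (congrFun h1 ⟨0, hn⟩) ⟨0, hn⟩
  have hs_ne : s ≠ 0 := by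
    contrapose! hY
    ext a b
    simp_all [s, sum_eq_zero_iff]
  obtain ⟨a, b, rfl⟩ := exists_eq_single_of_sum_sum_eq_one Y (by omega)
  obtain rfl : a = b := by
    by_contra hab
    simpa [hab] using congrFun (congrFun h1 a) b
  exact ⟨a, rfl⟩
end

section
/- Let n ≥ 1 and let i be any index with 1 ≤ i ≤ n. Then there exist matrices A_1, …, A_{n−1} ∈ M_n(ℕ) such that, with Y = E_{i,i}, one has Y + A_1·Y·A_1 + ⋯ + A_{n−1}·Y·A_{n−1} = I_n and A_1²·A_2²·⋯·A_{n−1}² = I_n. -/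
open Matrix Equiv

section PermMatrix

variable {n R : Type*} [Fintype n] [DecidableEq n]

theorem Equiv.Perm.permMatrix_mul_single_mul_permMatrix [NonAssocSemiring R] (σ : Perm n)
    (i j : n) (r : R) :
    σ.permMatrix R * single i j r * σ.permMatrix R = single (σ.symm i) (σ j) r := by
  rw [PEquiv.toMatrix_toPEquiv_mul, PEquiv.mul_toMatrix_toPEquiv, submatrix_submatrix,
    Function.comp_id, Function.id_comp, submatrix_single_equiv, symm_symm]

theorem Equiv.Perm.permMatrix_swap_sq [Semiring R] (a b : n) :
    (swap a b).permMatrix R ^ 2 = 1 := by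
  rw [sq, ← permMatrix_mul, swap_mul_self, permMatrix_one]

end PermMatrix

theorem stmt10_general (n : ℕ) (i : Fin n) :
    ∃ A : Fin (n - 1) → Matrix (Fin n) (Fin n) ℕ,
      Matrix.single i i 1
          + ∑ j : Fin (n - 1), A j * Matrix.single i i 1 * A j = 1
        ∧ (List.ofFn fun j : Fin (n - 1) => (A j) ^ 2).prod = 1 := by
  obtain ⟨m, rfl⟩ := Nat.exists_eq_add_one_of_ne_zero i.pos.ne'
  refine ⟨fun j => (swap i (i.succAbove j)).permMatrix ℕ, ?_, ?_⟩
  · simp only [Perm.permMatrix_mul_single_mul_permMatrix, symm_swap, swap_apply_left]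
    exact (Fin.sum_univ_succAbove (fun k => single k k (1 : ℕ)) i).symm.trans sum_single_one
  · simp only [Perm.permMatrix_swap_sq, List.ofFn_const, List.prod_replicate, one_pow]

/-- For every index `i`, there exist matrices `A_1, …, A_{n-1} ∈ M_n(ℕ)` such that,
with `Y = E_{i,i}`, one has `Y + A_1·Y·A_1 + ⋯ + A_{n-1}·Y·A_{n-1} = I_n` and
`A_1²·A_2²·⋯·A_{n-1}² = I_n` (product in the listed order). -/
theorem stmt10 (n : ℕ) (hn : 1 ≤ n) (i : Fin n) :
    ∃ A : Fin (n - 1) → Matrix (Fin n) (Fin n) ℕ,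
      Matrix.single i i 1
          + ∑ j : Fin (n - 1), A j * Matrix.single i i 1 * A j = 1
        ∧ (List.ofFn fun j : Fin (n - 1) => (A j) ^ 2).prod = 1 :=
  stmt10_general n i
end

section
/- Fix n ≥ 1 and k ≥ 1, and let p, q be non-commutative polynomials in k variables with natural number coefficients. Then there exist x_1, …, x_k ∈ ℕ with p(x_1,…,x_k) = q(x_1,…,x_k) if and only if there exist matrices Y, A_1, …, A_{n−1}, X_1, …, X_k ∈ M_n(ℕ) satisfying the system: Y + A_1·Y·A_1 + ⋯ + A_{n−1}·Y·A_{n−1} = I_n, A_1²·A_2²·⋯·A_{n−1}² = I_n, X_j·Y = Y·X_j for all 1 ≤ j ≤ k, and p(X_1,…,X_k) = q(X_1,…,X_k). -/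
/-!
For `⇒`, take `Y = E₀₀`, let `A_j` be the permutation matrix of the transposition `(0 j)`, so that
`A_j Y A_j = E_jj`, and let `X_j = x_j I`.

For `⇐`, the `A_j` are invertible in the Dedekind-finite monoid `M_n(ℕ)`, and an invertible matrix
over `ℕ` has all row and column sums equal to `1`, so `Y ↦ A_j Y A_j` preserves the sum of the
entries. Summing all entries of the first equation gives `n · ΣY = n`; as `Y ≤ I` entrywise, `Y` is
a diagonal matrix unit `E_aa`. On the centralizer of `E_aa` the entry at `(a, a)` is an
`ℕ`-algebra homomorphism to `ℕ`, and it maps the matrix solution `X` to a solution in `ℕ`.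
-/

open Matrix

theorem List.isUnit_of_mem_of_isUnit_prod {M : Type*} [Monoid M] [IsDedekindFiniteMonoid M]
    {l : List M} (hl : IsUnit l.prod) {x : M} (hx : x ∈ l) : IsUnit x := by
  induction l with
  | nil => simp at hx
  | cons a t ih =>
    rw [List.prod_cons, IsUnit.mul_iff] at hl
    rcases List.mem_cons.1 hx with rfl | hx
    exacts [hl.1, ih hl.2 hx]

theorem FreeAlgebra.comp_lift {R X A B : Type*} [CommSemiring R] [Semiring A] [Algebra R A]
    [Semiring B] [Algebra R B] (g : A →ₐ[R] B) (f : X → A) :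
    g.comp (lift R f) = lift R (g ∘ f) :=
  FreeAlgebra.hom_ext <| by ext; simp

theorem FreeAlgebra.lift_algebraMap_comp {R X A : Type*} [CommSemiring R] [Semiring A] [Algebra R A]
    (x : X → R) (p : FreeAlgebra R X) :
    lift R (algebraMap R A ∘ x) p = algebraMap R A (lift R x p) := by
  rw [← show (Algebra.ofId R A) ∘ x = algebraMap R A ∘ x from rfl, ← comp_lift]
  rfl

namespace Matrix

variable {ι : Type*} [Fintype ι]

theorem one_dotProduct_mul_mul_mulVec_one {R : Type*} [Semiring R] {A B : Matrix ι ι R}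
    (hA : 1 ᵥ* A = 1) (hB : B *ᵥ 1 = 1) (Y : Matrix ι ι R) :
    1 ⬝ᵥ (A * Y * B) *ᵥ 1 = 1 ⬝ᵥ Y *ᵥ 1 := by
  rw [← mulVec_mulVec, ← mulVec_mulVec, hB, dotProduct_mulVec, hA]

variable [DecidableEq ι]

theorem one_vecMul_eq_one_of_isUnit {A : Matrix ι ι ℕ} (hA : IsUnit A) : 1 ᵥ* A = 1 := by
  obtain ⟨⟨A, B, hAB, hBA⟩, rfl⟩ := hA
  -- The column sums of `A` and the row sums of `B` are positive integers whose pairing is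
  -- `1ᵀ (A B) 1 = |ι|`, so they are all `1`.
  have hpos : ∀ k, 1 ≤ (1 ᵥ* A) k * (B *ᵥ 1) k := by
    intro k
    have hkk : ∑ m, B k m * A m k = 1 := by simpa [mul_apply] using congrFun₂ hBA k k
    obtain ⟨m, -, hm⟩ := Finset.exists_ne_zero_of_sum_ne_zero (hkk ▸ one_ne_zero)
    have hA : A m k ≤ (1 ᵥ* A) k := by
      simpa [vecMul, dotProduct] using
        Finset.single_le_sum (fun i _ => Nat.zero_le (A i k)) (Finset.mem_univ m)
    have hB : B k m ≤ (B *ᵥ 1) k := by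
      simpa [mulVec, dotProduct] using
        Finset.single_le_sum (fun i _ => Nat.zero_le (B k i)) (Finset.mem_univ m)
    calc 1 ≤ B k m * A m k := Nat.one_le_iff_ne_zero.2 hm
      _ ≤ (1 ᵥ* A) k * (B *ᵥ 1) k := by rw [mul_comm]; exact Nat.mul_le_mul hA hB
  have htotal : ∑ k, (1 ᵥ* A) k * (B *ᵥ 1) k = ∑ _k : ι, 1 := by
    change (1 ᵥ* A) ⬝ᵥ (B *ᵥ 1) = 1 ⬝ᵥ 1
    rw [← dotProduct_mulVec, mulVec_mulVec, hAB, one_mulVec]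
  ext k
  have := (Finset.sum_eq_sum_iff_of_le (fun k _ => hpos k)).1 htotal.symm k (Finset.mem_univ k)
  exact Nat.eq_one_of_mul_eq_one_right this.symm

theorem mulVec_one_eq_one_of_isUnit {A : Matrix ι ι ℕ} (hA : IsUnit A) : A *ᵥ 1 = 1 := by
  simpa [vecMul_transpose] using one_vecMul_eq_one_of_isUnit ((isUnit_transpose A).2 hA)

theorem exists_eq_single_of_le_one {Y : Matrix ι ι ℕ}
    (hle : ∀ i j, Y i j ≤ (1 : Matrix ι ι ℕ) i j) (hsum : 1 ⬝ᵥ Y *ᵥ 1 = 1) :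
    ∃ a, Y = single a a 1 := by
  simp only [dotProduct, mulVec, Pi.one_apply, one_mul, mul_one] at hsum
  obtain ⟨a, -, ha⟩ := Finset.exists_ne_zero_of_sum_ne_zero (hsum ▸ one_ne_zero)
  obtain ⟨b, -, hab⟩ := Finset.exists_ne_zero_of_sum_ne_zero ha
  obtain rfl : a = b := by
    by_contra h
    have := hle a b
    rw [one_apply_ne h] at this
    omega
  have hsingle : ∀ i j, single a a 1 i j ≤ Y i j := by
    intro i j
    rw [single_apply]
    split_ifs with h
    · obtain ⟨rfl, rfl⟩ := h
      exact Nat.one_le_iff_ne_zero.2 hab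
    · exact Nat.zero_le _
  have hrow := (Finset.sum_eq_sum_iff_of_le fun i _ => Finset.sum_le_sum fun j _ => hsingle i j).1
    (by rw [hsum]; simp [single_apply, ite_and])
  refine ⟨a, ext fun i j => ?_⟩
  exact ((Finset.sum_eq_sum_iff_of_le fun j _ => hsingle i j).1 (hrow i (Finset.mem_univ i))
    j (Finset.mem_univ j)).symm

theorem exists_eq_single_of_add_sum_conj_eq_one {J : Type*} [Fintype J] {Y : Matrix ι ι ℕ}
    {A : J → Matrix ι ι ℕ} (hA : ∀ j, IsUnit (A j)) (hcard : Fintype.card J + 1 = Fintype.card ι)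
    (hY : Y + ∑ j, A j * Y * A j = 1) : ∃ a, Y = single a a 1 := by
  have hsum : (Fintype.card J + 1) * (1 ⬝ᵥ Y *ᵥ 1) = Fintype.card J + 1 := by
    have := congrArg (fun M => 1 ⬝ᵥ M *ᵥ 1) hY
    simp only [add_mulVec, sum_mulVec, dotProduct_add, dotProduct_sum, one_mulVec,
      one_dotProduct_mul_mul_mulVec_one (one_vecMul_eq_one_of_isUnit (hA _))
        (mulVec_one_eq_one_of_isUnit (hA _)), Finset.sum_const, Finset.card_univ, smul_eq_mul,
      dotProduct_one, Pi.one_apply, ← hcard] at this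
    linarith
  refine exists_eq_single_of_le_one (fun i j => ?_) ((Nat.mul_eq_left (by omega)).1 hsum)
  rw [← hY, add_apply]
  exact Nat.le_add_right _ _

theorem apply_eq_zero_of_commute_single {R : Type*} [Semiring R] {M : Matrix ι ι R} {a b : ι}
    (h : Commute M (single a a 1)) (hb : b ≠ a) : M b a = 0 := by
  simpa [mul_single_apply_same, single_mul_apply_of_ne _ a a b a hb] using congrFun₂ h b a

theorem exists_add_sum_conj_single_eq_one {R : Type*} [Semiring R] (m : ℕ) :
    ∃ A : Fin m → Matrix (Fin (m + 1)) (Fin (m + 1)) R,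
      single 0 0 1 + ∑ j, A j * single 0 0 1 * A j = 1 ∧ (List.ofFn fun j => A j ^ 2).prod = 1 := by
  refine ⟨fun j => (Equiv.swap 0 j.succ).permMatrix R, ?_, List.prod_eq_one ?_⟩
  · rw [← sum_single_one, Fin.sum_univ_succ]
    congr 1
    refine Finset.sum_congr rfl fun j _ => ?_
    simp [PEquiv.toMatrix_toPEquiv_mul, PEquiv.mul_toMatrix_toPEquiv, submatrix_single_equiv]
  · simp [sq, ← permMatrix_mul]

variable (R : Type*) [CommSemiring R]

def centralizerSingleCornerHom (a : ι) :
    Subalgebra.centralizer R {single a a (1 : R)} →ₐ[R] R where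
  toFun M := (M : Matrix ι ι R) a a
  map_one' := one_apply_eq a
  map_zero' := rfl
  map_add' _ _ := rfl
  map_mul' M N := by
    have hN : ∀ b ≠ a, (N : Matrix ι ι R) b a = 0 := fun b hb =>
      apply_eq_zero_of_commute_single ((Subalgebra.mem_centralizer_iff R).1 N.2 _ rfl).symm hb
    show ((M : Matrix ι ι R) * N) a a = _
    rw [mul_apply, Finset.sum_eq_single a (fun b _ hb => by rw [hN b hb, mul_zero]) (by simp)]
  commutes' r := algebraMap_matrix_apply.trans (if_pos rfl)

variable {R}

theorem lift_apply_apply_of_commute_single {κ : Type*} {a : ι} (X : κ → Matrix ι ι R)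
    (hX : ∀ j, Commute (X j) (single a a 1)) (p : FreeAlgebra R κ) :
    FreeAlgebra.lift R X p a a = FreeAlgebra.lift R (fun j => X j a a) p := by
  let Xc : κ → Subalgebra.centralizer R {single a a (1 : R)} := fun j =>
    ⟨X j, (Subalgebra.mem_centralizer_iff R).2 fun _ hg => hg ▸ (hX j).symm⟩
  have hval : FreeAlgebra.lift R X = (Subalgebra.val _).comp (FreeAlgebra.lift R Xc) := by
    rw [FreeAlgebra.comp_lift]; rfl
  rw [hval, ← show (centralizerSingleCornerHom R a) ∘ Xc = fun j => X j a a from rfl,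
    ← FreeAlgebra.comp_lift]
  rfl

end Matrix

theorem stmt13_general (n k : ℕ) (hn : 1 ≤ n)
    (p q : FreeAlgebra ℕ (Fin k)) :
    (∃ x : Fin k → ℕ, FreeAlgebra.lift ℕ x p = FreeAlgebra.lift ℕ x q)
      ↔ (∃ (Y : Matrix (Fin n) (Fin n) ℕ)
            (A : Fin (n - 1) → Matrix (Fin n) (Fin n) ℕ)
            (X : Fin k → Matrix (Fin n) (Fin n) ℕ),
          Y + ∑ j : Fin (n - 1), A j * Y * A j = 1
          ∧ (List.ofFn fun j : Fin (n - 1) => (A j) ^ 2).prod = 1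
          ∧ (∀ j : Fin k, X j * Y = Y * X j)
          ∧ FreeAlgebra.lift ℕ X p = FreeAlgebra.lift ℕ X q) := by
  constructor
  · rintro ⟨x, hx⟩
    obtain ⟨m, rfl⟩ : ∃ m, n = m + 1 := ⟨n - 1, by omega⟩
    obtain ⟨A, hY, hA⟩ := exists_add_sum_conj_single_eq_one (R := ℕ) m
    refine ⟨single 0 0 1, A, algebraMap ℕ _ ∘ x, hY, hA, fun j => Algebra.commutes _ _, ?_⟩
    rw [FreeAlgebra.lift_algebraMap_comp, FreeAlgebra.lift_algebraMap_comp, hx]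
  · rintro ⟨Y, A, X, hY, hA, hX, hpq⟩
    have hunit : ∀ j, IsUnit (A j) := fun j =>
      (IsUnit.mul_iff.1 (sq (A j) ▸ List.isUnit_of_mem_of_isUnit_prod (hA ▸ isUnit_one)
        (List.mem_ofFn.2 ⟨j, rfl⟩))).1
    have hcard : Fintype.card (Fin (n - 1)) + 1 = Fintype.card (Fin n) := by
      simp only [Fintype.card_fin]; omega
    obtain ⟨a, rfl⟩ := exists_eq_single_of_add_sum_conj_eq_one hunit hcard hY
    refine ⟨fun j => X j a a, ?_⟩
    rw [← lift_apply_apply_of_commute_single X hX, ← lift_apply_apply_of_commute_single X hX, hpq]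

/-- The equation `p(x_1,…,x_k) = q(x_1,…,x_k)` (with `p, q` non-commutative polynomials
with natural coefficients) has a solution in `ℕ^k` if and only if the system
`Y + A_1·Y·A_1 + ⋯ + A_{n-1}·Y·A_{n-1} = I_n`, `A_1²·⋯·A_{n-1}² = I_n`,
`X_j·Y = Y·X_j` for all `j`, and `p(X_1,…,X_k) = q(X_1,…,X_k)` has a solution in
`M_n(ℕ)`. -/
theorem stmt13 (n k : ℕ) (hn : 1 ≤ n) (hk : 1 ≤ k)
    (p q : FreeAlgebra ℕ (Fin k)) :
    (∃ x : Fin k → ℕ, FreeAlgebra.lift ℕ x p = FreeAlgebra.lift ℕ x q)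
      ↔ (∃ (Y : Matrix (Fin n) (Fin n) ℕ)
            (A : Fin (n - 1) → Matrix (Fin n) (Fin n) ℕ)
            (X : Fin k → Matrix (Fin n) (Fin n) ℕ),
          Y + ∑ j : Fin (n - 1), A j * Y * A j = 1
          ∧ (List.ofFn fun j : Fin (n - 1) => (A j) ^ 2).prod = 1
          ∧ (∀ j : Fin k, X j * Y = Y * X j)
          ∧ FreeAlgebra.lift ℕ X p = FreeAlgebra.lift ℕ X q) :=
  stmt13_general n k hn p q
end
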